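/- (Céa's Lemma) Let V be a real Hilbert space, let b : V × V → ℝ be a bilinear form that is continuous with constant M (b(u,v) ≤ M‖u‖‖v‖ for all u,v ∈ V) and coercive with constant α > 0 (α‖u‖² ≤ b(u,u) for all u ∈ V), and let l : V → ℝ be a continuous linear functional. Let U_h be a closed subspace of V. If u ∈ V satisfies b(u,v) = l(v) for all v ∈ V, and u_h ∈ U_h satisfies b(u_h, v_h) = l(v_h) for all v_h ∈ U_h, then ‖u - u_h‖ ≤ (M/α) · inf_{w_h ∈ U_h} ‖u - w_h‖ = (M/α) · dist(U_h, u). -/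
import Mathlib


/-- Céa's Lemma: Let V be a real Hilbert space, b a bilinear form on V,
continuous with constant M and coercive with constant α > 0, l a continuous linear
functional, and U_h a closed subspace of V. If u solves b(u,v) = l(v) for all v ∈ V
and u_h ∈ U_h solves b(u_h, v_h) = l(v_h) for all v_h ∈ U_h, then
‖u - u_h‖ ≤ (M/α) · dist(U_h, u) = (M/α) · inf_{w_h ∈ U_h} ‖u - w_h‖. -/
theorem cea_lemma
    {V : Type*} [NormedAddCommGroup V] [InnerProductSpace ℝ V] [CompleteSpace V]
    (b : V →ₗ[ℝ] V →ₗ[ℝ] ℝ) (M α : ℝ) (hα : 0 < α)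
    (hcont : ∀ u v : V, b u v ≤ M * ‖u‖ * ‖v‖)
    (hcoer : ∀ u : V, α * ‖u‖ ^ 2 ≤ b u u)
    (l : V →L[ℝ] ℝ)
    (Uh : Submodule ℝ V) (hUh : IsClosed (Uh : Set V))
    (u : V) (hu : ∀ v : V, b u v = l v)
    (uh : V) (huh : uh ∈ Uh) (hgalerkin : ∀ vh ∈ Uh, b uh vh = l vh) :
    ‖u - uh‖ ≤ M / α * Metric.infDist u (Uh : Set V) := by
  have hne : (Uh : Set V).Nonempty := ⟨0, Uh.zero_mem⟩
  have horth : ∀ wh ∈ Uh, b (u - uh) wh = 0 := by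
    intro wh hwh
    simp [hu wh, hgalerkin wh hwh]
  by_cases h : u = uh
  · subst h
    have h0 : Metric.infDist u (Uh : Set V) = 0 := by
      have hle : Metric.infDist u (Uh : Set V) ≤ 0 := by
        simpa using Metric.infDist_le_dist_of_mem (x := u) huh
      exact le_antisymm hle Metric.infDist_nonneg
    simp [h0]
  · have hn : 0 < ‖u - uh‖ := by
      rw [norm_pos_iff]
      exact sub_ne_zero_of_ne h
    have key : ∀ w ∈ Uh, α * ‖u - uh‖ ≤ M * ‖u - w‖ := by
      intro w hw
      have hb : b (u - uh) (u - uh) = b (u - uh) (u - w) := by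
        have heq : b (u - uh) (u - uh) = b (u - uh) (u - w) + b (u - uh) (w - uh) := by
          rw [← map_add]
          congr 1
          abel
        rw [heq, horth (w - uh) (Uh.sub_mem hw huh), add_zero]
      have h1 : α * ‖u - uh‖ ^ 2 ≤ M * ‖u - uh‖ * ‖u - w‖ :=
        le_trans (hcoer (u - uh)) (by rw [hb]; exact hcont (u - uh) (u - w))
      have h2 : α * ‖u - uh‖ * ‖u - uh‖ ≤ M * ‖u - w‖ * ‖u - uh‖ := by
        nlinarith [h1]
      exact le_of_mul_le_mul_right h2 hn
    have hM : 0 < M := by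
      have := key uh huh
      nlinarith [hn, norm_nonneg (u - uh)]
    have hinf : α / M * ‖u - uh‖ ≤ Metric.infDist u (Uh : Set V) := by
      by_contra hc
      push_neg at hc
      obtain ⟨w, hw, hdw⟩ := (Metric.infDist_lt_iff hne).1 hc
      rw [dist_eq_norm] at hdw
      have := key w hw
      rw [div_mul_eq_mul_div, lt_div_iff₀ hM] at hdw
      nlinarith
    rw [div_mul_eq_mul_div, le_div_iff₀ hα]
    rw [div_mul_eq_mul_div, div_le_iff₀ hM] at hinf
    linarith
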